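/- Suppose there exist ε > 0 and r₀ > 0 such that ⟨x/|x|, b(t,x)⟩ ≤ −ε|b(t,x)| for all |x| ≥ r₀ and all t ≥ 0, and |b(t,x)| → ∞ as |x| → ∞ uniformly in t. Then for any h_max > 0 there exist r ≥ r₀ and κ > 0 such that for all |x| ≥ r, all t ≥ 0, and all 0 < h ≤ h_max, the tamed drift b_h(t,x) = b(t,x)/(1+h|b(t,x)|) satisfies 2⟨x/|x|, b_h(t,x)⟩ + (h/|x|)|b_h(t,x)|² ≤ −κ. -/
import Mathlib


open scoped RealInnerProductSpace

/-- if `b` points inward at infinity (`⟨x/|x|, b(t,x)⟩ ≤ −ε|b(t,x)|`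
for `|x| ≥ r₀`) and `|b(t,x)| → ∞` as `|x| → ∞` uniformly in `t`, then for any
`h_max > 0` there are `r ≥ r₀` and `κ > 0` such that the tamed drift satisfies
`2⟨x/|x|, b_h(t,x)⟩ + (h/|x|)|b_h(t,x)|² ≤ −κ` for all `|x| ≥ r`, `t ≥ 0`,
`0 < h ≤ h_max`. -/
theorem tamed_drift_inward {d : ℕ}
    (b : ℝ → EuclideanSpace ℝ (Fin d) → EuclideanSpace ℝ (Fin d))
    (ε r₀ : ℝ) (hε : 0 < ε) (hr₀ : 0 < r₀)
    (hinward : ∀ t : ℝ, 0 ≤ t → ∀ x : EuclideanSpace ℝ (Fin d), r₀ ≤ ‖x‖ →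
      ⟪(‖x‖)⁻¹ • x, b t x⟫ ≤ -ε * ‖b t x‖)
    (hdiv : ∀ M : ℝ, ∃ r : ℝ, ∀ t : ℝ, 0 ≤ t → ∀ x : EuclideanSpace ℝ (Fin d),
      r ≤ ‖x‖ → M ≤ ‖b t x‖)
    (hmax : ℝ) (hhmax : 0 < hmax) :
    ∃ r : ℝ, r₀ ≤ r ∧ ∃ κ : ℝ, 0 < κ ∧
      ∀ t : ℝ, 0 ≤ t → ∀ x : EuclideanSpace ℝ (Fin d), r ≤ ‖x‖ →
        ∀ h : ℝ, 0 < h → h ≤ hmax →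
          2 * ⟪(‖x‖)⁻¹ • x, (1 + h * ‖b t x‖)⁻¹ • b t x⟫ +
              h / ‖x‖ * ‖(1 + h * ‖b t x‖)⁻¹ • b t x‖ ^ 2 ≤ -κ := by
  obtain ⟨r₁, hr₁⟩ := hdiv 1
  refine ⟨max r₀ (max ε⁻¹ r₁), le_max_left _ _, ε / (1 + hmax), by positivity, ?_⟩
  intro t ht x hx h hh hhm
  have hxr₀ : r₀ ≤ ‖x‖ := le_trans (le_max_left _ _) hx
  have hx0 : (0:ℝ) < ‖x‖ := lt_of_lt_of_le hr₀ hxr₀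
  have hxε : ε⁻¹ ≤ ‖x‖ := le_trans (le_trans (le_max_left _ _) (le_max_right _ _)) hx
  have hB1 : (1:ℝ) ≤ ‖b t x‖ :=
    hr₁ t ht x (le_trans (le_trans (le_max_right _ _) (le_max_right _ _)) hx)
  set B := ‖b t x‖ with hBdef
  have hBpos : (0:ℝ) < B := lt_of_lt_of_le one_pos hB1
  have hD : (0:ℝ) < 1 + h * B := by positivity
  have hip : ⟪(‖x‖)⁻¹ • x, b t x⟫ ≤ -ε * B := hinward t ht x hxr₀
  have hinner : ⟪(‖x‖)⁻¹ • x, (1 + h * B)⁻¹ • b t x⟫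
      = (1 + h * B)⁻¹ * ⟪(‖x‖)⁻¹ • x, b t x⟫ := real_inner_smul_right _ _ _
  have hnorm : ‖(1 + h * B)⁻¹ • b t x‖ = (1 + h * B)⁻¹ * B := by
    rw [norm_smul, Real.norm_eq_abs, abs_of_pos (inv_pos.mpr hD)]
  rw [hinner, hnorm]
  set c : ℝ := (1 + h * B)⁻¹ with hcdef
  have hc : 0 < c := inv_pos.mpr hD
  have hcD : c * (1 + h * B) = 1 := inv_mul_cancel₀ (ne_of_gt hD)
  -- 2 c ip ≤ -2 ε c B
  have h1 : 2 * (c * ⟪(‖x‖)⁻¹ • x, b t x⟫) ≤ -2 * ε * (c * B) := by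
    nlinarith [mul_le_mul_of_nonneg_left hip (le_of_lt hc)]
  -- h c B ≤ 1
  have h2 : h * (c * B) ≤ 1 := by nlinarith
  -- 1/‖x‖ ≤ ε
  have h3 : 1 / ‖x‖ ≤ ε := by
    rw [div_le_iff₀ hx0]
    calc (1:ℝ) = ε * ε⁻¹ := (mul_inv_cancel₀ (ne_of_gt hε)).symm
    _ ≤ ε * ‖x‖ := by exact mul_le_mul_of_nonneg_left hxε (le_of_lt hε)
  -- second term ≤ ε * (c * B)
  have h4 : h / ‖x‖ * (c * B) ^ 2 ≤ ε * (c * B) := by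
    have hcB : 0 ≤ c * B := le_of_lt (mul_pos hc hBpos)
    have : h / ‖x‖ * (c * B) ^ 2 = (1 / ‖x‖) * ((h * (c * B)) * (c * B)) := by ring
    rw [this]
    calc (1 / ‖x‖) * ((h * (c * B)) * (c * B))
        ≤ (1 / ‖x‖) * (1 * (c * B)) := by
          apply mul_le_mul_of_nonneg_left _ (by positivity)
          exact mul_le_mul_of_nonneg_right h2 hcB
      _ = (1 / ‖x‖) * (c * B) := by ring
      _ ≤ ε * (c * B) := mul_le_mul_of_nonneg_right h3 hcB
  -- c * B ≥ 1/(1+hmax)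
  have h5 : (1 + hmax)⁻¹ ≤ c * B := by
    rw [hcdef, inv_mul_eq_div, inv_eq_one_div, div_le_div_iff₀ (by positivity) hD]
    nlinarith
  have h6 : -(ε * (c * B)) ≤ -(ε / (1 + hmax)) := by
    rw [neg_le_neg_iff, div_eq_mul_inv]
    exact mul_le_mul_of_nonneg_left h5 (le_of_lt hε)
  nlinarith [mul_le_mul_of_nonneg_left h5 (le_of_lt hε)]
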